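/- The type B q-Eulerian polynomials satisfy the q-symmetry B_{n,k}(q) = q^{2nk - n^2} · B_{n,n-k}(q) for all 0 ≤ k ≤ n (as an identity of Laurent polynomials / rational functions in q). -/
import Mathlib


open Finset LaurentPolynomial

/-- A signed permutation of `{1,...,n}`, encoded as an (unsigned) permutation together
with a sign for each position. -/
abbrev SignedPerm (n : ℕ) := Equiv.Perm (Fin n) × (Fin n → Bool)

/-- The value `π_i ∈ {±1,...,±n}` (1-indexed) of a signed permutation; `π_0 = 0`. -/
def spVal {n : ℕ} (π : SignedPerm n) (i : ℕ) : ℤ :=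
  if h : 1 ≤ i ∧ i ≤ n then
    (if π.2 ⟨i - 1, by omega⟩ then -(((π.1 ⟨i - 1, by omega⟩ : Fin n) : ℤ) + 1)
     else ((π.1 ⟨i - 1, by omega⟩ : Fin n) : ℤ) + 1)
  else 0

/-- The type B descent set `Des_B(π) = {i ∈ {0,...,n-1} : π_i > π_{i+1}}` (with `π_0 = 0`). -/
def desSetB {n : ℕ} (π : SignedPerm n) : Finset ℕ :=
  (Finset.range n).filter fun i => spVal π (i + 1) < spVal π i

/-- `neg(π)`, the number of negative entries of a signed permutation. -/
def negB {n : ℕ} (π : SignedPerm n) : ℕ :=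
  ((Finset.range n).filter fun i => spVal π (i + 1) < 0).card

/-- The flag-major index `fmaj(π) = 2 Σ_{i ∈ Des_B(π)} i + neg(π)`. -/
def fmajB {n : ℕ} (π : SignedPerm n) : ℕ := 2 * ∑ i ∈ desSetB π, i + negB π

/-- The type B q-Eulerian number `B_{n,ℓ}(q) = Σ_{des_B(π)=ℓ} q^{fmaj(π)}`,
as a Laurent polynomial in `q`. -/
noncomputable def qEulerB (n ℓ : ℕ) : LaurentPolynomial ℤ :=
  ∑ π ∈ Finset.univ.filter fun π : SignedPerm n => (desSetB π).card = ℓ,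
    T (fmajB π : ℤ)

namespace Stmt8Aux

variable {n : ℕ}

/-- The involution `π ↦ Φ(π)` with `Φ(π)_i = -sign(π_{n+1-i})·(n+1-|π_{n+1-i}|)`. -/
def phi (π : SignedPerm n) : SignedPerm n :=
  (Fin.revPerm.trans (π.1.trans Fin.revPerm), fun i => !π.2 i.rev)

lemma phi_phi (π : SignedPerm n) : phi (phi π) = π := by
  obtain ⟨σ, s⟩ := π
  refine Prod.ext ?_ ?_
  · ext x
    simp [phi, Fin.rev_rev]
  · funext i
    simp [phi, Fin.rev_rev]

lemma spVal_fin (π : SignedPerm n) (j : Fin n) :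
    spVal π ((j : ℕ) + 1) =
      if π.2 j then -(((π.1 j : Fin n) : ℤ) + 1) else ((π.1 j : Fin n) : ℤ) + 1 := by
  rw [spVal, dif_pos ⟨by omega, by omega⟩]
  rfl

lemma spVal_out (π : SignedPerm n) (i : ℕ) (h : ¬ (1 ≤ i ∧ i ≤ n)) : spVal π i = 0 := by
  rw [spVal, dif_neg h]

lemma spVal_props (π : SignedPerm n) (i : ℕ) (h1 : 1 ≤ i) (h2 : i ≤ n) :
    spVal π i ≠ 0 ∧ -(n : ℤ) ≤ spVal π i ∧ spVal π i ≤ n := by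
  have hj : i = ((⟨i - 1, by omega⟩ : Fin n) : ℕ) + 1 := by simp; omega
  rw [hj, spVal_fin π _]
  have h5 := (π.1 ⟨i - 1, by omega⟩).isLt
  have h5' : ((π.1 ⟨i - 1, by omega⟩ : Fin n) : ℤ) < n := by exact_mod_cast h5
  have h6 : (0 : ℤ) ≤ ((π.1 ⟨i - 1, by omega⟩ : Fin n) : ℤ) := by positivity
  split <;> omega

lemma spVal_ne (π : SignedPerm n) (j : ℕ) (h1 : 1 ≤ j) (h2 : j < n) :
    spVal π j ≠ spVal π (j + 1) := by
  obtain ⟨i, rfl⟩ : ∃ i, j = i + 1 := ⟨j - 1, by omega⟩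
  have e1 : i + 1 = ((⟨i, by omega⟩ : Fin n) : ℕ) + 1 := by simp
  rw [e1, spVal_fin π _]
  have e2 : ((⟨i, by omega⟩ : Fin n) : ℕ) + 1 + 1 = ((⟨i + 1, by omega⟩ : Fin n) : ℕ) + 1 := by simp
  rw [e2, spVal_fin π _]
  have hne : π.1 ⟨i, by omega⟩ ≠ π.1 ⟨i + 1, by omega⟩ := by
    intro hc
    have := π.1.injective hc
    simp only [Fin.mk.injEq] at this
    omega
  have hne' : ((π.1 ⟨i, by omega⟩ : Fin n) : ℤ) ≠ ((π.1 ⟨i + 1, by omega⟩ : Fin n) : ℤ) := by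
    intro hc
    exact hne (Fin.ext (by exact_mod_cast hc))
  have h0 : (0 : ℤ) ≤ ((π.1 ⟨i, by omega⟩ : Fin n) : ℤ) := by positivity
  have h0' : (0 : ℤ) ≤ ((π.1 ⟨i + 1, by omega⟩ : Fin n) : ℤ) := by positivity
  split <;> split <;> omega

/-- `g(v) = sign(v)(n+1-|v|)` for `0 < |v| ≤ n`, `g(0)=0`. -/
def gg (n : ℕ) (v : ℤ) : ℤ := if 0 < v then (n + 1) - v else if v < 0 then -(n + 1) - v else 0

lemma spVal_phi_fin (π : SignedPerm n) (j : Fin n) :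
    spVal (phi π) ((j : ℕ) + 1) = - gg n (spVal π ((j.rev : ℕ) + 1)) := by
  rw [spVal_fin (phi π) j, spVal_fin π j.rev]
  have h2 : (phi π).2 j = !π.2 j.rev := rfl
  have h3 : (phi π).1 j = (π.1 j.rev).rev := rfl
  rw [h2, h3]
  have hval : ((π.1 j.rev).rev : ℕ) = n - ((π.1 j.rev : ℕ) + 1) := Fin.val_rev _
  have hlt := (π.1 j.rev).isLt
  have hv : (((π.1 j.rev).rev : Fin n) : ℤ) = (n : ℤ) - 1 - ((π.1 j.rev : Fin n) : ℤ) := by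
    omega
  rw [hv]
  have hlt' : ((π.1 j.rev : Fin n) : ℤ) < n := by exact_mod_cast hlt
  have h0 : (0 : ℤ) ≤ ((π.1 j.rev : Fin n) : ℤ) := by positivity
  rcases hb : π.2 j.rev with _ | _ <;>
    · simp [hb]
      unfold gg
      split_ifs <;> omega

lemma spVal_phi_succ (π : SignedPerm n) (i : ℕ) (hi : i < n) :
    spVal (phi π) (i + 1) = - gg n (spVal π (n - i)) := by
  have h1 : spVal (phi π) (((⟨i, hi⟩ : Fin n) : ℕ) + 1)
      = - gg n (spVal π (((⟨i, hi⟩ : Fin n).rev : ℕ) + 1)) := spVal_phi_fin π ⟨i, hi⟩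
  have h2 : ((⟨i, hi⟩ : Fin n).rev : ℕ) + 1 = n - i := by
    have hval := Fin.val_rev (⟨i, hi⟩ : Fin n)
    have hmk : ((⟨i, hi⟩ : Fin n) : ℕ) = i := rfl
    omega
  rw [h2] at h1
  exact h1

/-- descent indicator of `π` (with out-of-range guard). -/
def DD (π : SignedPerm n) (j : ℕ) : ℤ := if j < n ∧ spVal π (j + 1) < spVal π j then 1 else 0

/-- negativity indicator. -/
def NN (π : SignedPerm n) (j : ℕ) : ℤ := if spVal π j < 0 then 1 else 0

lemma key (π : SignedPerm n) (i : ℕ) (hi : i < n) :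
    (if spVal (phi π) (i + 1) < spVal (phi π) i then (1 : ℤ) else 0)
      = 1 - (DD π (n - i) + NN π (n - i) - NN π (n - i + 1)) := by
  rcases i with _ | i
  · -- i = 0
    have h0 : spVal (phi π) 0 = 0 := spVal_out _ 0 (by omega)
    rw [h0, spVal_phi_succ π 0 hi]
    have hn1 : spVal π (n + 1) = 0 := spVal_out _ _ (by omega)
    have hD : DD π n = 0 := by simp [DD]
    obtain ⟨hne, hlb, hub⟩ := spVal_props π n (by omega) le_rfl
    simp only [Nat.sub_zero, hD, NN, hn1]
    unfold gg
    split_ifs <;> omega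
  · -- i+1 with i+1 < n
    have hj1 : 1 ≤ n - (i + 1) := by omega
    have hj2 : n - (i + 1) < n := by omega
    have e1 : spVal (phi π) (i + 1 + 1) = - gg n (spVal π (n - (i + 1))) :=
      spVal_phi_succ π (i + 1) hi
    have e2 : spVal (phi π) (i + 1) = - gg n (spVal π (n - (i + 1) + 1)) := by
      rw [spVal_phi_succ π i (by omega)]
      have : n - i = n - (i + 1) + 1 := by omega
      rw [this]
    obtain ⟨hne, hlb, hub⟩ := spVal_props π (n - (i + 1)) hj1 (by omega)
    obtain ⟨hne', hlb', hub'⟩ := spVal_props π (n - (i + 1) + 1) (by omega) (by omega)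
    have hvv := spVal_ne π (n - (i + 1)) hj1 hj2
    rw [e1, e2]
    simp only [DD, NN, hj2, true_and]
    unfold gg
    split_ifs <;> omega

lemma keyneg (π : SignedPerm n) (i : ℕ) (hi : i < n) :
    (if spVal (phi π) (i + 1) < 0 then (1 : ℤ) else 0) = 1 - NN π (n - i) := by
  rw [spVal_phi_succ π i hi]
  obtain ⟨hne, hlb, hub⟩ := spVal_props π (n - i) (by omega) (by omega)
  simp only [NN]
  unfold gg
  split_ifs <;> omega

lemma reflect (H : ℕ → ℤ) : ∑ i ∈ range n, H (n - i) = ∑ i ∈ range n, H (i + 1) := by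
  rw [← Finset.sum_range_reflect (fun i => H (i + 1)) n]
  refine Finset.sum_congr rfl fun i hi => ?_
  rw [Finset.mem_range] at hi
  congr 1
  omega

lemma cast_card (π : SignedPerm n) : ((desSetB π).card : ℤ) = ∑ j ∈ range n, DD π j := by
  rw [desSetB, Finset.card_filter]
  push_cast
  refine Finset.sum_congr rfl fun j hj => ?_
  rw [Finset.mem_range] at hj
  simp [DD, hj]

lemma cast_neg (π : SignedPerm n) : ((negB π : ℤ)) = ∑ j ∈ range n, NN π (j + 1) := by
  rw [negB, Finset.card_filter]
  push_cast
  rfl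

lemma cast_sum (π : SignedPerm n) :
    (∑ i ∈ desSetB π, (i : ℤ)) = ∑ j ∈ range n, (j : ℤ) * DD π j := by
  rw [desSetB, Finset.sum_filter]
  refine Finset.sum_congr rfl fun j hj => ?_
  rw [Finset.mem_range] at hj
  simp only [DD, hj, true_and]
  split <;> simp

lemma DD_zero (π : SignedPerm n) : DD π 0 = NN π 1 := by
  by_cases hn : 0 < n
  · have h0 : spVal π 0 = 0 := spVal_out _ _ (by omega)
    simp [DD, NN, h0, hn]
  · have h1 : spVal π 1 = 0 := spVal_out _ _ (by omega)
    simp [DD, NN, h1]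
    omega

lemma NN_top (π : SignedPerm n) : NN π (n + 1) = 0 := by
  simp [NN, spVal_out π (n + 1) (by omega)]

lemma shift_sum (G : ℕ → ℤ) (hGn : G n = 0) :
    ∑ i ∈ range n, G (i + 1) = (∑ j ∈ range n, G j) - G 0 := by
  have h1 := Finset.sum_range_succ' G n
  have h2 := Finset.sum_range_succ G n
  rw [h2, hGn, add_zero] at h1
  omega

lemma card_phi (π : SignedPerm n) :
    ((desSetB (phi π)).card : ℤ) = n - (desSetB π).card := by
  rw [cast_card (phi π), cast_card π]
  have step1 : ∑ j ∈ range n, DD (phi π) j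
      = ∑ j ∈ range n, ((1 : ℤ) - (fun m => DD π m + NN π m - NN π (m + 1)) (n - j)) := by
    refine Finset.sum_congr rfl fun j hj => ?_
    rw [Finset.mem_range] at hj
    rw [← key π j hj]
    simp [DD, hj]
  rw [step1, Finset.sum_sub_distrib,
    reflect (fun m => DD π m + NN π m - NN π (m + 1)),
    Finset.sum_sub_distrib, Finset.sum_add_distrib]
  have tele : ∑ i ∈ range n, NN π (i + 1 + 1) = (∑ i ∈ range n, NN π (i + 1)) - NN π 1 := by
    have := shift_sum (n := n) (fun m => NN π (m + 1)) (NN_top π)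
    simpa using this
  have hD : ∑ i ∈ range n, DD π (i + 1) = (∑ j ∈ range n, DD π j) - DD π 0 :=
    shift_sum (DD π) (by simp [DD])
  rw [tele, hD, DD_zero]
  simp [Finset.sum_const, Finset.card_range]
  ring

lemma neg_phi (π : SignedPerm n) : ((negB (phi π) : ℤ)) = n - negB π := by
  rw [cast_neg (phi π), cast_neg π]
  have step1 : ∑ j ∈ range n, NN (phi π) (j + 1)
      = ∑ j ∈ range n, ((1 : ℤ) - (fun m => NN π m) (n - j)) := by
    refine Finset.sum_congr rfl fun j hj => ?_
    rw [Finset.mem_range] at hj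
    rw [← keyneg π j hj]
    simp [NN]
  rw [step1, Finset.sum_sub_distrib, reflect (fun m => NN π m)]
  simp [Finset.sum_const, Finset.card_range]

lemma gauss : (2 : ℤ) * ∑ i ∈ range n, (i : ℤ) = (n : ℤ) ^ 2 - n := by
  induction n with
  | zero => simp
  | succ m ih =>
    rw [Finset.sum_range_succ, mul_add, ih]
    push_cast
    ring

lemma fmaj_phi (π : SignedPerm n) :
    ((fmajB (phi π) : ℤ)) = fmajB π + (n : ℤ) ^ 2 - 2 * n * (desSetB π).card := by
  have hW : ∑ i ∈ range n, (i : ℤ) * DD (phi π) i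
      = (∑ i ∈ range n, (i : ℤ))
        - ((n : ℤ) * (desSetB π).card - (∑ i ∈ desSetB π, (i : ℤ)) - negB π) := by
    have step1 : ∑ i ∈ range n, (i : ℤ) * DD (phi π) i
        = ∑ i ∈ range n, ((i : ℤ) * 1
            - (fun m => ((n : ℤ) - m) * (DD π m + NN π m - NN π (m + 1))) (n - i)) := by
      refine Finset.sum_congr rfl fun i hi => ?_
      rw [Finset.mem_range] at hi
      have hk := key π i hi
      have hDD : DD (phi π) i = if spVal (phi π) (i + 1) < spVal (phi π) i then (1:ℤ) else 0 := by
        simp [DD, hi]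
      rw [hDD, hk]
      have hcast : ((n - i : ℕ) : ℤ) = (n : ℤ) - i := by omega
      simp only [hcast]
      ring
    rw [step1, Finset.sum_sub_distrib,
      reflect (fun m => ((n : ℤ) - m) * (DD π m + NN π m - NN π (m + 1)))]
    have expand : ∑ i ∈ range n, ((n : ℤ) - (↑(i + 1))) * (DD π (i+1) + NN π (i+1) - NN π (i+1+1))
        = ∑ i ∈ range n, ((fun m => ((n : ℤ) - m) * DD π m) (i + 1))
          + (∑ i ∈ range n, (((n : ℤ) - i) * NN π (i + 1) - NN π (i + 1))
          - ∑ i ∈ range n, ((fun m => ((n : ℤ) - m) * NN π (m + 1)) (i + 1))) := by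
      rw [← Finset.sum_sub_distrib, ← Finset.sum_add_distrib]
      refine Finset.sum_congr rfl fun i hi => ?_
      push_cast
      ring
    rw [expand]
    have hS1 : ∑ i ∈ range n, ((fun m => ((n : ℤ) - m) * DD π m) (i + 1))
        = (∑ j ∈ range n, ((n : ℤ) - j) * DD π j) - (n : ℤ) * DD π 0 := by
      have := shift_sum (n := n) (fun m => ((n : ℤ) - m) * DD π m) (by simp [DD])
      simpa using this
    have hS3 : ∑ i ∈ range n, ((fun m => ((n : ℤ) - m) * NN π (m + 1)) (i + 1))
        = (∑ j ∈ range n, ((n : ℤ) - j) * NN π (j + 1)) - (n : ℤ) * NN π 1 := by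
      have := shift_sum (n := n) (fun m => ((n : ℤ) - m) * NN π (m + 1))
        (by simp [NN_top π])
      simpa using this
    rw [hS1, hS3, Finset.sum_sub_distrib]
    have hG : ∑ j ∈ range n, ((n : ℤ) - j) * DD π j
        = (n : ℤ) * (∑ j ∈ range n, DD π j) - ∑ j ∈ range n, (j : ℤ) * DD π j := by
      rw [Finset.mul_sum, ← Finset.sum_sub_distrib]
      refine Finset.sum_congr rfl fun j hj => by ring
    rw [hG, ← cast_card, ← cast_sum, ← cast_neg, DD_zero]
    simp only [mul_one]
    ring
  have hfmaj : (fmajB (phi π) : ℤ)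
      = 2 * ∑ i ∈ range n, (i : ℤ) * DD (phi π) i + (negB (phi π) : ℤ) := by
    rw [fmajB]
    push_cast
    rw [cast_sum (phi π)]
  have hfm : (fmajB π : ℤ) = 2 * (∑ i ∈ desSetB π, (i : ℤ)) + negB π := by
    rw [fmajB]; push_cast; ring
  rw [hfmaj, hW, neg_phi, hfm]
  have hg := gauss (n := n)
  linarith

lemma card_le (π : SignedPerm n) : (desSetB π).card ≤ n := by
  calc (desSetB π).card ≤ (range n).card := Finset.card_filter_le _ _
  _ = n := Finset.card_range n

end Stmt8Aux

open Stmt8Aux in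
theorem stmt8 (n k : ℕ) (h : k ≤ n) :
    qEulerB n k = T (2 * (n : ℤ) * (k : ℤ) - (n : ℤ) ^ 2) * qEulerB n (n - k) := by
  classical
  rw [qEulerB, qEulerB, Finset.mul_sum]
  refine Finset.sum_nbij' (i := phi) (j := phi) ?_ ?_ ?_ ?_ ?_
  · intro π hπ
    rw [Finset.mem_filter] at hπ ⊢
    refine ⟨Finset.mem_univ _, ?_⟩
    have := card_phi π
    omega
  · intro π hπ
    rw [Finset.mem_filter] at hπ ⊢
    refine ⟨Finset.mem_univ _, ?_⟩
    have h1 := card_phi π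
    have h2 := card_le π
    omega
  · intro π _; exact phi_phi π
  · intro π _; exact phi_phi π
  · intro π hπ
    rw [Finset.mem_filter] at hπ
    rw [← T_add]
    congr 1
    have hf := fmaj_phi π
    rw [hπ.2] at hf
    rw [hf]
    ring
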